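/- arXiv:1601.02425 — 8 statements merged into one kernel-verified Lean document; each statement's English description precedes it below -/
import Mathlib

section
/- The projection π₁ : Z → H from the incidence set Z = {(K, x) ∈ H × X : x ∈ K} to the Hausdorff space H is an open map. -/
/-!
If `L` is within `ε` of `K` in the Hausdorff metric and `x ∈ K`, a point `y ∈ L` nearest to `x`
satisfies `dist x y ≤ d_H(K, L) < ε`, so `(L, y)` is within `ε` of `(K, x)` in the incidence set:
every `L` near `K` is the projection of a point near `(K, x)`.
-/

open TopologicalSpace

theorem Metric.NonemptyCompacts.exists_mem_dist_le {X : Type*} [MetricSpace X]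
    {K : NonemptyCompacts X} {x : X} (hx : x ∈ K) (L : NonemptyCompacts X) :
    ∃ y ∈ L, dist x y ≤ dist K L := by
  obtain ⟨y, hyL, hy⟩ := L.isCompact.exists_infDist_eq_dist L.nonempty x
  refine ⟨y, hyL, hy ▸ ?_⟩
  rw [Metric.NonemptyCompacts.dist_eq]
  exact Metric.infDist_le_hausdorffDist_of_mem hx <|
    Metric.hausdorffEDist_ne_top_of_nonempty_of_bounded K.nonempty L.nonempty
      K.isCompact.isBounded L.isCompact.isBounded

theorem stmt1 (X : Type*) [MetricSpace X] :
    IsOpenMap (fun z : {p : NonemptyCompacts X × X // p.2 ∈ (p.1 : Set X)} => z.1.1) := by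
  intro U hU
  rw [Metric.isOpen_iff]
  rintro _ ⟨⟨⟨K, x⟩, hx⟩, hxU, rfl⟩
  obtain ⟨ε, hε, hball⟩ := Metric.isOpen_iff.mp hU _ hxU
  refine ⟨ε, hε, fun L hL => ?_⟩
  obtain ⟨y, hy, hxy⟩ := Metric.NonemptyCompacts.exists_mem_dist_le hx L
  refine ⟨⟨(L, y), hy⟩, hball ?_, rfl⟩
  rw [Metric.mem_ball, Subtype.dist_eq, Prod.dist_eq, dist_comm y]
  exact max_lt hL (hxy.trans_lt (dist_comm K L ▸ hL))
end

section
/- Let T be a topological space, X a metric space, H the space of nonempty compact subsets of X with the Hausdorff metric. If f : T → H is continuous, then the projection π₁ : Z_f → T, where Z_f = {(t, x) ∈ T × X : x ∈ f(t)}, is an open map. -/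
open TopologicalSpace

open Set Topology

/-! Hausdorff-continuity of `f` makes `t ↦ f t` lower hemicontinuous: a point of `f t` is
approximated by points of `f t'` for `t'` near `t`. For any set-valued map, lower
hemicontinuity is exactly openness of the projection of its graph, since the projection of a
basic open set `(V ×ˢ U) ∩ graph` is `V ∩ {t | f t meets U}`. -/

theorem TopologicalSpace.NonemptyCompacts.lowerHemicontinuousAt_of_continuousAt
    {T X : Type*} [TopologicalSpace T] [EMetricSpace X] {f : T → NonemptyCompacts X} {t : T}
    (hf : ContinuousAt f t) : LowerHemicontinuousAt (fun t => (f t : Set X)) t := by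
  rw [lowerHemicontinuousAt_iff]
  rintro U hU ⟨x, hxt, hxU⟩
  obtain ⟨ε, hε, hball⟩ := EMetric.isOpen_iff.mp hU x hxU
  filter_upwards [EMetric.tendsto_nhds.mp hf ε hε] with t' ht'
  obtain ⟨y, hy, hxy⟩ :=
    Metric.exists_edist_lt_of_hausdorffEDist_lt hxt (edist_comm (f t') _ ▸ ht')
  exact ⟨y, hy, hball (Metric.mem_eball'.mpr hxy)⟩

theorem image_fst_graph_preimage_prod {T X : Type*} (F : T → Set X) (V : Set T) (U : Set X) :
    (fun z : {p : T × X // p.2 ∈ F p.1} => z.1.1) '' (Subtype.val ⁻¹' (V ×ˢ U)) =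
      V ∩ {t | (F t ∩ U).Nonempty} := by
  ext t
  constructor
  · rintro ⟨⟨⟨t, x⟩, hx⟩, ⟨htV, hxU⟩, rfl⟩
    exact ⟨htV, x, hx, hxU⟩
  · rintro ⟨htV, x, hx, hxU⟩
    exact ⟨⟨(t, x), hx⟩, ⟨htV, hxU⟩, rfl⟩

theorem isOpenMap_graph_fst_iff_lowerHemicontinuous {T X : Type*} [TopologicalSpace T]
    [TopologicalSpace X] {F : T → Set X} :
    IsOpenMap (fun z : {p : T × X // p.2 ∈ F p.1} => z.1.1) ↔ LowerHemicontinuous F := by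
  have hbasis := (isTopologicalBasis_opens.prod isTopologicalBasis_opens).isInducing
    (IsEmbedding.subtypeVal (p := fun p : T × X => p.2 ∈ F p.1)).isInducing
  rw [hbasis.isOpenMap_iff, lowerHemicontinuous_iff_isOpen_inter_nonempty]
  constructor
  · intro h U hU
    simpa only [image_fst_graph_preimage_prod, univ_inter] using
      h _ ⟨_, ⟨univ, isOpen_univ, U, hU, rfl⟩, rfl⟩
  · rintro h _ ⟨_, ⟨V, hV, U, hU, rfl⟩, rfl⟩
    simpa only [image_fst_graph_preimage_prod] using hV.inter (h U hU)

theorem stmt8 (T : Type*) [TopologicalSpace T] (X : Type*) [MetricSpace X]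
    (f : T → NonemptyCompacts X) (hf : Continuous f) :
    IsOpenMap (fun z : {p : T × X // p.2 ∈ (f p.1 : Set X)} => z.1.1) :=
  isOpenMap_graph_fst_iff_lowerHemicontinuous.mpr fun _ =>
    NonemptyCompacts.lowerHemicontinuousAt_of_continuousAt hf.continuousAt
end

section
/- Let T be a topological space, X a metric space, H the space of nonempty compact subsets of X with the Hausdorff metric. If f : T → H is continuous, then the projection π₁ : Z_f → T, where Z_f = {(t, x) ∈ T × X : x ∈ f(t)}, is a proper map (i.e., closed with compact fibers). -/
/-!
Continuity of `f` for the Hausdorff metric makes `t ↦ f t` upper hemicontinuous. For a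
compact-valued upper hemicontinuous map, an ultrafilter on the graph whose first coordinate tends
to `t` has its second coordinate eventually in every neighbourhood of the compact set `f t`, so the
second coordinate converges to a point of `f t`; this is the ultrafilter criterion for properness.
-/

open TopologicalSpace Metric Filter Topology

theorem IsCompact.exists_le_nhds_of_le_nhdsSet {X : Type*} [TopologicalSpace X] {K : Set X}
    (hK : IsCompact K) (𝒰 : Ultrafilter X) (h : ↑𝒰 ≤ 𝓝ˢ K) : ∃ x ∈ K, ↑𝒰 ≤ 𝓝 x := by
  by_contra! hfar
  have hdisj : Disjoint (𝓝ˢ K) 𝒰 :=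
    hK.disjoint_nhdsSet_left.mpr fun x hx => (Ultrafilter.disjoint_iff_not_le.mpr (hfar x hx)).symm
  exact 𝒰.neBot.ne (disjoint_self.mp (hdisj.mono_left h))

theorem UpperHemicontinuous.isProperMap_graph_fst {T X : Type*} [TopologicalSpace T]
    [TopologicalSpace X] {K : T → Set X} (hK : UpperHemicontinuous K)
    (hKc : ∀ t, IsCompact (K t)) :
    IsProperMap (fun z : {p : T × X // p.2 ∈ K p.1} => z.1.1) := by
  rw [isProperMap_iff_ultrafilter]
  refine ⟨by fun_prop, fun 𝒰 t ht => ?_⟩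
  have hsnd : ↑(𝒰.map fun z => z.1.2) ≤ 𝓝ˢ (K t) := by
    intro s hs
    rw [Ultrafilter.coe_map, mem_map]
    exact mem_of_superset (ht (hK t s hs)) fun z hz => subset_of_mem_nhdsSet hz z.2
  obtain ⟨x, hx, hxlim⟩ := (hKc t).exists_le_nhds_of_le_nhdsSet _ hsnd
  exact ⟨⟨(t, x), hx⟩, rfl, tendsto_subtype_rng.mpr (ht.prodMk_nhds hxlim)⟩

theorem NonemptyCompacts.eventually_subset_of_mem_nhdsSet {X : Type*} [MetricSpace X]
    {K : NonemptyCompacts X} {s : Set X} (hs : s ∈ 𝓝ˢ (K : Set X)) :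
    ∀ᶠ L : NonemptyCompacts X in 𝓝 K, (L : Set X) ⊆ s := by
  obtain ⟨δ, hδ, hsub⟩ := (hasBasis_nhdsSet_thickening K.isCompact).mem_iff.mp hs
  filter_upwards [ball_mem_nhds K hδ] with L hL y hy
  rw [mem_ball, NonemptyCompacts.dist_eq] at hL
  obtain ⟨z, hz, hyz⟩ := exists_dist_lt_of_hausdorffDist_lt hy hL (edist_ne_top L K)
  exact hsub (mem_thickening_iff.mpr ⟨z, hz, hyz⟩)

theorem Continuous.upperHemicontinuous_nonemptyCompacts {T X : Type*} [TopologicalSpace T]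
    [MetricSpace X] {f : T → NonemptyCompacts X} (hf : Continuous f) :
    UpperHemicontinuous fun t => (f t : Set X) :=
  .of_forall_isOpen fun _ _ hu hsub => hf.continuousAt.eventually
    (NonemptyCompacts.eventually_subset_of_mem_nhdsSet (hu.mem_nhdsSet.mpr hsub))

theorem stmt9 (T : Type*) [TopologicalSpace T] (X : Type*) [MetricSpace X]
    (f : T → NonemptyCompacts X) (hf : Continuous f) :
    IsProperMap (fun z : {p : T × X // p.2 ∈ (f p.1 : Set X)} => z.1.1) :=
  hf.upperHemicontinuous_nonemptyCompacts.isProperMap_graph_fst fun t => (f t).isCompact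
end

section
/- Let T be a sequential topological space, X a metric space, H the space of nonempty compact subsets of X with the Hausdorff metric. If Z ⊆ T × X is closed, the projection π₁ : Z → T is open and proper, and every fiber Z_t = {x : (t,x) ∈ Z} is nonempty, then the map f : T → H, f(t) = Z_t, is continuous. -/
/-! Properness of the projection `Z → T` makes the fibers compact and upper semicontinuous
(the points of `Z` lying over `t` outside a neighbourhood of `Z_t` project to a closed set
missing `t`); openness makes them lower semicontinuous. For compact sets the two
semicontinuities together imply continuity in the Hausdorff metric. -/

open TopologicalSpace Filter Topology Metric

section Fibers

variable {T X : Type*} {Z : Set (T × X)}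

theorem fiber_eq_image_preimage (t : T) :
    {x : X | (t, x) ∈ Z} = (fun z : Z => z.1.2) '' ((fun z : Z => z.1.1) ⁻¹' {t}) := by
  ext x
  constructor
  · exact fun hx => ⟨⟨(t, x), hx⟩, rfl, rfl⟩
  · rintro ⟨⟨⟨t', x'⟩, hz⟩, rfl, rfl⟩
    exact hz

variable [TopologicalSpace T] [TopologicalSpace X]

theorem isCompact_fiber_of_isProperMap (h : IsProperMap (fun z : Z => z.1.1)) (t : T) :
    IsCompact {x : X | (t, x) ∈ Z} := by
  rw [fiber_eq_image_preimage]
  exact (h.isCompact_preimage isCompact_singleton).image (by fun_prop)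

theorem eventually_fiber_subset_of_isClosedMap (h : IsClosedMap (fun z : Z => z.1.1))
    {t : T} {U : Set X} (hU : IsOpen U) (htU : {x : X | (t, x) ∈ Z} ⊆ U) :
    ∀ᶠ s in 𝓝 t, {x : X | (s, x) ∈ Z} ⊆ U := by
  have hclosed : IsClosed ((fun z : Z => z.1.1) '' {z : Z | z.1.2 ∉ U}) :=
    h _ (hU.isClosed_compl.preimage (by fun_prop))
  have ht : t ∉ (fun z : Z => z.1.1) '' {z : Z | z.1.2 ∉ U} := by
    rintro ⟨⟨⟨t', x⟩, hz⟩, hxU, rfl⟩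
    exact hxU (htU hz)
  filter_upwards [hclosed.isOpen_compl.mem_nhds ht] with s hs x hx
  by_contra hxU
  exact hs ⟨⟨(s, x), hx⟩, hxU, rfl⟩

theorem eventually_fiber_inter_nonempty_of_isOpenMap (h : IsOpenMap (fun z : Z => z.1.1))
    {t : T} {U : Set X} (hU : IsOpen U) (htU : ({x : X | (t, x) ∈ Z} ∩ U).Nonempty) :
    ∀ᶠ s in 𝓝 t, ({x : X | (s, x) ∈ Z} ∩ U).Nonempty := by
  obtain ⟨x, hx, hxU⟩ := htU
  have hopen : IsOpen ((fun z : Z => z.1.1) '' {z : Z | z.1.2 ∈ U}) :=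
    h _ (hU.preimage (by fun_prop))
  filter_upwards [hopen.mem_nhds ⟨⟨(t, x), hx⟩, hxU, rfl⟩]
  rintro s ⟨⟨⟨s', y⟩, hz⟩, hyU, rfl⟩
  exact ⟨y, hz, hyU⟩

end Fibers

section Hausdorff

variable {ι X : Type*} [PseudoMetricSpace X] {l : Filter ι} {F : ι → Set X} {K : Set X}

theorem eventually_forall_exists_dist_le_of_upper
    (hupper : ∀ U, IsOpen U → K ⊆ U → ∀ᶠ i in l, F i ⊆ U) {ε : ℝ} (hε : 0 < ε) :
    ∀ᶠ i in l, ∀ x ∈ F i, ∃ y ∈ K, dist x y ≤ ε := by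
  filter_upwards [hupper _ isOpen_thickening (self_subset_thickening hε K)] with i hi x hx
  obtain ⟨y, hy, hxy⟩ := mem_thickening_iff.mp (hi hx)
  exact ⟨y, hy, hxy.le⟩

theorem eventually_forall_exists_dist_le_of_lower (hK : IsCompact K)
    (hlower : ∀ U, IsOpen U → (K ∩ U).Nonempty → ∀ᶠ i in l, (F i ∩ U).Nonempty)
    {ε : ℝ} (hε : 0 < ε) :
    ∀ᶠ i in l, ∀ y ∈ K, ∃ x ∈ F i, dist y x ≤ ε := by
  obtain ⟨c, hcK, hcover⟩ :=
    hK.elim_nhds_subcover (fun y => ball y (ε / 2)) (fun y _ => ball_mem_nhds y (half_pos hε))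
  have hmeet : ∀ᶠ i in l, ∀ z ∈ c, (F i ∩ ball z (ε / 2)).Nonempty :=
    (c.eventually_all).2 fun z hz =>
      hlower _ isOpen_ball ⟨z, hcK z hz, mem_ball_self (half_pos hε)⟩
  filter_upwards [hmeet] with i hi y hy
  obtain ⟨z, hzc, hyz⟩ := Set.mem_iUnion₂.mp (hcover hy)
  obtain ⟨x, hx, hxz⟩ := hi z hzc
  refine ⟨x, hx, ?_⟩
  calc dist y x ≤ dist y z + dist x z := dist_triangle_right _ _ _
    _ ≤ ε / 2 + ε / 2 := add_le_add (mem_ball.mp hyz).le (mem_ball.mp hxz).le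
    _ = ε := add_halves ε

theorem eventually_hausdorffDist_le_of_upper_of_lower (hK : IsCompact K)
    (hupper : ∀ U, IsOpen U → K ⊆ U → ∀ᶠ i in l, F i ⊆ U)
    (hlower : ∀ U, IsOpen U → (K ∩ U).Nonempty → ∀ᶠ i in l, (F i ∩ U).Nonempty)
    {ε : ℝ} (hε : 0 < ε) :
    ∀ᶠ i in l, hausdorffDist (F i) K ≤ ε := by
  filter_upwards [eventually_forall_exists_dist_le_of_upper hupper hε,
    eventually_forall_exists_dist_le_of_lower hK hlower hε] with i h₁ h₂
  exact hausdorffDist_le_of_mem_dist hε.le h₁ h₂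

end Hausdorff

theorem stmt11_general (T : Type*) [TopologicalSpace T]
    (X : Type*) [MetricSpace X] (Z : Set (T × X))
    (hopen : IsOpenMap (fun z : Z => z.1.1))
    (hproper : IsProperMap (fun z : Z => z.1.1))
    (hne : ∀ t : T, {x : X | (t, x) ∈ Z}.Nonempty) :
    ∃ f : T → NonemptyCompacts X,
      (∀ t : T, (f t : Set X) = {x : X | (t, x) ∈ Z}) ∧ Continuous f := by
  refine ⟨fun t => ⟨⟨_, isCompact_fiber_of_isProperMap hproper t⟩, hne t⟩, fun _ => rfl, ?_⟩
  refine continuous_iff_continuousAt.2 fun t => Metric.tendsto_nhds.2 fun ε hε => ?_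
  filter_upwards [eventually_hausdorffDist_le_of_upper_of_lower
    (isCompact_fiber_of_isProperMap hproper t)
    (fun _ hU => eventually_fiber_subset_of_isClosedMap hproper.isClosedMap hU)
    (fun _ hU => eventually_fiber_inter_nonempty_of_isOpenMap hopen hU) (half_pos hε)] with s hs
  rw [NonemptyCompacts.dist_eq]
  exact hs.trans_lt (half_lt_self hε)

theorem stmt11 (T : Type*) [TopologicalSpace T] [SequentialSpace T]
    (X : Type*) [MetricSpace X] (Z : Set (T × X)) (hZ : IsClosed Z)
    (hopen : IsOpenMap (fun z : Z => z.1.1))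
    (hproper : IsProperMap (fun z : Z => z.1.1))
    (hne : ∀ t : T, {x : X | (t, x) ∈ Z}.Nonempty) :
    ∃ f : T → NonemptyCompacts X,
      (∀ t : T, (f t : Set X) = {x : X | (t, x) ∈ Z}) ∧ Continuous f :=
  stmt11_general T X Z hopen hproper hne
end

section
/- Let X be a metric space and let Z be a closed subset of (OnePoint ℕ) × X with the first projection open and proper and all fibers Zₙ nonempty compact. Then for every ε > 0 there exists a neighborhood U of ∞ in OnePoint ℕ such that for all n ∈ U, the fiber Z_∞ is contained in the ε-neighborhood of Zₙ and Zₙ is contained in the ε-neighborhood of Z_∞; consequently n ↦ Zₙ is continuous at ∞ for the Hausdorff metric. -/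
open TopologicalSpace OnePoint Filter

theorem stmt12_aux (X : Type*) [MetricSpace X] (Z : Set (OnePoint ℕ × X)) (hZ : IsClosed Z)
    (hopen : IsOpenMap (fun z : Z => z.1.1))
    (hproper : IsProperMap (fun z : Z => z.1.1))
    (hc : ∀ t : OnePoint ℕ, IsCompact {x : X | (t, x) ∈ Z}) :
    ∀ ε : ℝ, 0 < ε → ∃ U ∈ nhds (∞ : OnePoint ℕ), ∀ n ∈ U,
        {x : X | ((∞ : OnePoint ℕ), x) ∈ Z} ⊆ Metric.thickening ε {x : X | (n, x) ∈ Z} ∧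
        {x : X | (n, x) ∈ Z} ⊆ Metric.thickening ε {x : X | ((∞ : OnePoint ℕ), x) ∈ Z} := by
  intro ε hε
  set Zinf : Set X := {x : X | ((∞ : OnePoint ℕ), x) ∈ Z} with hZinf
  -- Part A: openness gives Zinf ⊆ thickening ε Z_n for n near ∞
  have hcover : Zinf ⊆ ⋃ x ∈ Zinf, Metric.ball x (ε / 2) := fun x hx =>
    Set.mem_biUnion hx (Metric.mem_ball_self (by positivity))
  obtain ⟨s, hsZ, hsfin, hsub⟩ := (hc ∞).elim_finite_subcover_image
    (fun x _ => Metric.isOpen_ball) hcover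
  set Ux : X → Set (OnePoint ℕ) :=
    fun x => (fun z : Z => z.1.1) '' {z : Z | z.1.2 ∈ Metric.ball x (ε / 2)} with hUx
  have hUxopen : ∀ x, IsOpen (Ux x) := by
    intro x
    apply hopen
    exact (Metric.isOpen_ball).preimage
      (continuous_snd.comp continuous_subtype_val)
  have hUxmem : ∀ x ∈ Zinf, (∞ : OnePoint ℕ) ∈ Ux x := by
    intro x hx
    exact ⟨⟨(∞, x), hx⟩, Metric.mem_ball_self (by positivity), rfl⟩
  have hUA : (⋂ x ∈ s, Ux x) ∈ nhds (∞ : OnePoint ℕ) := by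
    rw [Filter.biInter_mem hsfin]
    exact fun x hx => ((hUxopen x).mem_nhds (hUxmem x (hsZ hx)))
  -- Part B: compactness gives Z_n ⊆ thickening ε Zinf for n near ∞
  have hZcomp : IsCompact Z := by
    rw [isCompact_iff_isCompact_univ]
    simpa using hproper.isCompact_preimage (isCompact_univ (X := OnePoint ℕ))
  set K : Set (OnePoint ℕ × X) := Z ∩ {p | p.2 ∉ Metric.thickening ε Zinf} with hK
  have hKcomp : IsCompact K :=
    hZcomp.inter_right ((Metric.isOpen_thickening.isClosed_compl).preimage continuous_snd)
  have hKimg : IsCompact (Prod.fst '' K) := hKcomp.image continuous_fst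
  have hUB : (Prod.fst '' K)ᶜ ∈ nhds (∞ : OnePoint ℕ) := by
    refine hKimg.isClosed.isOpen_compl.mem_nhds ?_
    rintro ⟨⟨t, x⟩, ⟨hz, hnt⟩, rfl⟩
    exact hnt (Metric.self_subset_thickening hε Zinf hz)
  refine ⟨(⋂ x ∈ s, Ux x) ∩ (Prod.fst '' K)ᶜ, Filter.inter_mem hUA hUB, ?_⟩
  rintro n ⟨hnA, hnB⟩
  constructor
  · intro x hx
    obtain ⟨x₀, hx₀s, hx₀⟩ := by simpa using hsub hx
    have : n ∈ Ux x₀ := Set.mem_iInter₂.1 hnA x₀ hx₀s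
    obtain ⟨⟨⟨t, y⟩, hzy⟩, hy, rfl⟩ := this
    refine Metric.mem_thickening_iff.2 ⟨y, hzy, ?_⟩
    calc dist x y ≤ dist x x₀ + dist x₀ y := dist_triangle _ _ _
      _ < ε / 2 + ε / 2 := add_lt_add hx₀ (by simpa [dist_comm] using hy)
      _ = ε := by ring
  · intro x hx
    by_contra hxt
    exact hnB ⟨(n, x), ⟨hx, hxt⟩, rfl⟩

theorem stmt12 (X : Type*) [MetricSpace X] (Z : Set (OnePoint ℕ × X)) (hZ : IsClosed Z)
    (hopen : IsOpenMap (fun z : Z => z.1.1))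
    (hproper : IsProperMap (fun z : Z => z.1.1))
    (hc : ∀ t : OnePoint ℕ, IsCompact {x : X | (t, x) ∈ Z})
    (hne : ∀ t : OnePoint ℕ, {x : X | (t, x) ∈ Z}.Nonempty) :
    (∀ ε : ℝ, 0 < ε → ∃ U ∈ nhds (∞ : OnePoint ℕ), ∀ n ∈ U,
        {x : X | ((∞ : OnePoint ℕ), x) ∈ Z} ⊆ Metric.thickening ε {x : X | (n, x) ∈ Z} ∧
        {x : X | (n, x) ∈ Z} ⊆ Metric.thickening ε {x : X | ((∞ : OnePoint ℕ), x) ∈ Z}) ∧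
    ContinuousAt (fun t : OnePoint ℕ =>
      (⟨⟨{x : X | (t, x) ∈ Z}, hc t⟩, hne t⟩ : NonemptyCompacts X)) ∞ := by
  have key := stmt12_aux X Z hZ hopen hproper hc
  refine ⟨key, ?_⟩
  rw [ContinuousAt, Metric.tendsto_nhds]
  intro ε hε
  obtain ⟨U, hU, h⟩ := key (ε / 2) (by positivity)
  filter_upwards [hU] with n hn
  obtain ⟨h1, h2⟩ := h n hn
  rw [Metric.NonemptyCompacts.dist_eq]
  refine lt_of_le_of_lt (Metric.hausdorffDist_le_of_mem_dist (le_of_lt (by positivity : (0:ℝ) < ε / 2)) ?_ ?_) (by linarith)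
  · intro x hx
    obtain ⟨y, hy, hxy⟩ := Metric.mem_thickening_iff.1 (h2 hx)
    exact ⟨y, hy, hxy.le⟩
  · intro y hy
    obtain ⟨x, hx, hyx⟩ := Metric.mem_thickening_iff.1 (h1 hy)
    exact ⟨x, hx, by simpa [dist_comm] using hyx.le⟩
end

section
/- Let T be a sequential topological space, H an arbitrary topological space, and f : T → H a function. Then f is continuous if and only if for every continuous map g : OnePoint ℕ → T, the composition f ∘ g is continuous. -/
/-- Convergent sequences `u → x` in `X` are exactly the continuous maps `OnePoint ℕ → X`
(sending `∞` to `x`), so sequential continuity can be tested on such maps. -/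
theorem seqContinuous_iff_continuous_comp_onePoint_nat {X Y : Type*} [TopologicalSpace X]
    [TopologicalSpace Y] {f : X → Y} :
    SeqContinuous f ↔ ∀ g : OnePoint ℕ → X, Continuous g → Continuous (f ∘ g) := by
  constructor
  · intro hf g hg
    rw [OnePoint.continuous_iff_from_nat] at hg ⊢
    exact hf hg
  · intro h u x hu
    exact (OnePoint.continuous_iff_from_nat _).1 <|
      h _ (OnePoint.continuousMapMkNat u x hu).continuous

theorem stmt13 (T : Type*) [TopologicalSpace T] [SequentialSpace T]
    (H : Type*) [TopologicalSpace H] (f : T → H) :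
    Continuous f ↔ ∀ g : OnePoint ℕ → T, Continuous g → Continuous (f ∘ g) :=
  continuous_iff_seqContinuous.trans seqContinuous_iff_continuous_comp_onePoint_nat
end

section
/- Let X be a metric space with Hausdorff space H of nonempty compact subsets, and let q : X → Y be an open, proper, surjective continuous map onto a topological space Y. Then the function e : Y → H defined by e(y) = q⁻¹(y) is well-defined (each fiber is nonempty compact) and continuous. -/
/-!
On nonempty compact subsets the Hausdorff metric induces the Vietoris topology, so continuity of
`y ↦ q⁻¹{y}` means that `{y | q⁻¹{y} ⊆ U}` is open for open `U` and closed for closed `U`.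
This set is the complement of `q '' Uᶜ`, which is open when `U` is open because a proper map is
closed, and closed when `U` is closed because `q` is open.
-/

open TopologicalSpace

section

attribute [local instance] TopologicalSpace.vietoris

variable {X Y : Type*} [TopologicalSpace X] [TopologicalSpace Y] {q : X → Y}

theorem IsOpenMap.continuous_preimage_singleton_vietoris (hopen : IsOpenMap q)
    (hclosed : IsClosedMap q) : Continuous (q ⁻¹' {·}) :=
  vietoris.continuous_iff.2
    ⟨fun _ hU => isClosedMap_iff_kernImage.1 hclosed hU,
      fun _ hF => isOpenMap_iff_kernImage.1 hopen hF⟩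

def IsProperMap.fiberNonemptyCompacts (hproper : IsProperMap q) (hsurj : Function.Surjective q)
    (y : Y) : NonemptyCompacts X :=
  ⟨⟨q ⁻¹' {y}, hproper.isCompact_preimage isCompact_singleton⟩,
    (Set.singleton_nonempty y).preimage hsurj⟩

theorem IsProperMap.continuous_fiberNonemptyCompacts (hproper : IsProperMap q)
    (hsurj : Function.Surjective q) (hopen : IsOpenMap q) :
    Continuous (hproper.fiberNonemptyCompacts hsurj) :=
  NonemptyCompacts.isEmbedding_coe.continuous_iff.2 <|
    hopen.continuous_preimage_singleton_vietoris hproper.isClosedMap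

end

theorem stmt15_general (X : Type*) [MetricSpace X] (Y : Type*) [TopologicalSpace Y]
    (q : X → Y) (hopen : IsOpenMap q)
    (hproper : IsProperMap q) (hsurj : Function.Surjective q) :
    (∀ y : Y, IsCompact (q ⁻¹' {y}) ∧ (q ⁻¹' {y}).Nonempty) ∧
    ∃ e : Y → NonemptyCompacts X,
      (∀ y : Y, (e y : Set X) = q ⁻¹' {y}) ∧ Continuous e :=
  let e := hproper.fiberNonemptyCompacts hsurj
  ⟨fun y => ⟨(e y).isCompact, (e y).nonempty⟩, e, fun _ => rfl,
    hproper.continuous_fiberNonemptyCompacts hsurj hopen⟩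

theorem stmt15 (X : Type*) [MetricSpace X] (Y : Type*) [TopologicalSpace Y]
    (q : X → Y) (hcont : Continuous q) (hopen : IsOpenMap q)
    (hproper : IsProperMap q) (hsurj : Function.Surjective q) :
    (∀ y : Y, IsCompact (q ⁻¹' {y}) ∧ (q ⁻¹' {y}).Nonempty) ∧
    ∃ e : Y → NonemptyCompacts X,
      (∀ y : Y, (e y : Set X) = q ⁻¹' {y}) ∧ Continuous e :=
  stmt15_general X Y q hopen hproper hsurj
end

section
/- Let X be a metric space with Hausdorff space H of nonempty compact subsets, and let q : X → Y be an open, proper, surjective continuous map. Then the map e : Y → H, e(y) = q⁻¹(y), is a topological embedding (continuous, injective, and a homeomorphism onto its image). -/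
/-!
On nonempty compacta the Hausdorff metric topology is the Vietoris topology (Mathlib builds the
metric on `NonemptyCompacts X` so that this holds by definition), generated by the sets
`{K | K ⊆ U}` and `{K | K ∩ U ≠ ∅}` for open `U`. The fibre map `e` pulls them back to
`kernImage q U = {y | q⁻¹ y ⊆ U}`, open because `q` is closed, and to `q '' U`, open because `q`
is open. Conversely every open `V ⊆ Y` equals `e⁻¹ {K | K ⊆ q⁻¹ V}` since `q` is continuous and
surjective, so `e` is inducing.
-/

open TopologicalSpace Set Topology Function

namespace IsProperMap

variable {X Y : Type*} [TopologicalSpace X] [TopologicalSpace Y] {q : X → Y}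

def fiber (hq : IsProperMap q) (hs : Surjective q) (y : Y) : NonemptyCompacts X :=
  ⟨⟨q ⁻¹' {y}, hq.isCompact_preimage isCompact_singleton⟩,
    hs.nonempty_preimage.2 (singleton_nonempty y)⟩

variable (hq : IsProperMap q) (hs : Surjective q)

@[simp]
theorem coe_fiber (y : Y) : (hq.fiber hs y : Set X) = q ⁻¹' {y} := rfl

theorem fiber_injective : Injective (hq.fiber hs) := fun _ _ h =>
  singleton_injective <| hs.preimage_injective <| congrArg ((↑) : NonemptyCompacts X → Set X) h

theorem preimage_fiber_setOf_subset (U : Set X) :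
    hq.fiber hs ⁻¹' {K | ↑K ⊆ U} = kernImage q U :=
  rfl

theorem preimage_fiber_setOf_subset_preimage (V : Set Y) :
    hq.fiber hs ⁻¹' {K | ↑K ⊆ q ⁻¹' V} = V := by
  rw [preimage_fiber_setOf_subset, kernImage_preimage_eq_iff, hs.range_eq, compl_univ]
  exact empty_subset V

theorem preimage_fiber_setOf_inter_nonempty (U : Set X) :
    hq.fiber hs ⁻¹' {K | (↑K ∩ U).Nonempty} = q '' U := by
  ext y
  exact ⟨fun ⟨x, hxy, hxU⟩ => ⟨x, hxU, hxy⟩, fun ⟨x, hxU, hxy⟩ => ⟨x, hxy, hxU⟩⟩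

attribute [local instance] TopologicalSpace.vietoris in
theorem continuous_fiber (ho : IsOpenMap q) : Continuous (hq.fiber hs) := by
  rw [NonemptyCompacts.isEmbedding_coe.continuous_iff]
  refine continuous_generateFrom_iff.2 ?_
  rintro _ (⟨U, hU, rfl⟩ | ⟨U, hU, rfl⟩)
  · exact (preimage_fiber_setOf_subset hq hs U).symm ▸
      isClosedMap_iff_kernImage.1 hq.isClosedMap hU
  · exact (preimage_fiber_setOf_inter_nonempty hq hs U).symm ▸ ho U hU

theorem isEmbedding_fiber (ho : IsOpenMap q) : IsEmbedding (hq.fiber hs) := by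
  refine ⟨⟨le_antisymm (continuous_iff_le_induced.1 (hq.continuous_fiber hs ho)) ?_⟩,
    hq.fiber_injective hs⟩
  intro V hV
  exact isOpen_induced_iff.2 ⟨_, NonemptyCompacts.isOpen_subsets_of_isOpen
    (hV.preimage hq.continuous), hq.preimage_fiber_setOf_subset_preimage hs V⟩

end IsProperMap

theorem stmt16_general (X : Type*) [MetricSpace X] (Y : Type*) [TopologicalSpace Y]
    (q : X → Y) (hopen : IsOpenMap q)
    (hproper : IsProperMap q) (hsurj : Function.Surjective q) :
    ∃ e : Y → NonemptyCompacts X,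
      (∀ y : Y, (e y : Set X) = q ⁻¹' {y}) ∧ Topology.IsEmbedding e :=
  ⟨hproper.fiber hsurj, hproper.coe_fiber hsurj, hproper.isEmbedding_fiber hsurj hopen⟩

theorem stmt16 (X : Type*) [MetricSpace X] (Y : Type*) [TopologicalSpace Y]
    (q : X → Y) (hcont : Continuous q) (hopen : IsOpenMap q)
    (hproper : IsProperMap q) (hsurj : Function.Surjective q) :
    ∃ e : Y → NonemptyCompacts X,
      (∀ y : Y, (e y : Set X) = q ⁻¹' {y}) ∧ Topology.IsEmbedding e :=
  stmt16_general X Y q hopen hproper hsurj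
end
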